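/- If V: ℂ² → ℂ is entire with real restriction to ℝ², y ↦ e^{−y²/2} V(iy) is in L¹(ℝ²), and Ṽ(p) := e^{p²/2} ∫ e^{−ipy} e^{−y²/2} V(iy) dy/(2π)² is in L¹(ℝ²), then V(q) = ∫ e^{−|q−p|²/2} Ṽ(p) dp for all q ∈ ℝ², i.e. V = g ∗ (Ṽ dq) with g the standard Gaussian. -/

import Mathlib

open Real MeasureTheory

/-!
Let `W(y) = e^{-|y|²/2} V(iy)`. Up to the factor `(2π)⁻²`, `e^{-|p|²/2} Ṽ(p)` is the Fourier
transform of `W`. Since `Ṽ ∈ L¹`, the Gaussian convolution `G(z) = ∫ e^{-(z-p)²/2} Ṽ(p) dp` is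
defined for every `z ∈ ℂ²` and is holomorphic in each variable, and Fourier inversion gives
`G(iy) = e^{|y|²/2} W(y) = V(iy)`. The identity theorem, applied one variable at a time, extends
`G = V` from `iℝ²` to `ℂ²`, in particular to `ℝ²`.
-/

/-- The modified Fourier transform
`Ṽ(p) = e^{p²/2} ∫ e^{−ipy} e^{−y²/2} V(iy) dy/(2π)²`. -/
noncomputable def modFT (V : ℂ × ℂ → ℂ) (p : ℝ × ℝ) : ℂ :=
  ((Real.exp ((p.1 ^ 2 + p.2 ^ 2) / 2) : ℝ) : ℂ) *
    ∫ y : ℝ × ℝ, Complex.exp (-Complex.I * ((p.1 * y.1 + p.2 * y.2 : ℝ) : ℂ)) *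
      ((Real.exp (-(y.1 ^ 2 + y.2 ^ 2) / 2) : ℝ) : ℂ) *
      V (Complex.I * y.1, Complex.I * y.2) / ((2 * π : ℝ) : ℂ) ^ 2

open Complex (I)
open scoped Complex FourierTransform RealInnerProductSpace
open Filter Topology

theorem Differentiable.eq_of_eq_on_imaginary_axis {f g : ℂ → ℂ} (hf : Differentiable ℂ f)
    (hg : Differentiable ℂ g) (h : ∀ t : ℝ, f (I * t) = g (I * t)) : f = g := by
  have hI : Tendsto (fun t : ℝ => I * t) (𝓝[≠] 0) (𝓝[≠] 0) := by
    refine tendsto_nhdsWithin_of_tendsto_nhds_of_eventually_within _ ?_ ?_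
    · have := (by fun_prop : Continuous fun t : ℝ => I * t).tendsto 0
      simpa using this.mono_left nhdsWithin_le_nhds
    · filter_upwards [self_mem_nhdsWithin] with t ht using by simpa using ht
  exact AnalyticOnNhd.eq_of_frequently_eq (fun z _ => hf.analyticAt z)
    (fun z _ => hg.analyticAt z) (hI.frequently (Frequently.of_forall h))

theorem eq_of_eq_on_imaginary_plane {F G : ℂ × ℂ → ℂ}
    (hF₁ : ∀ w, Differentiable ℂ fun z => F (z, w))
    (hF₂ : ∀ z, Differentiable ℂ fun w => F (z, w))
    (hG₁ : ∀ w, Differentiable ℂ fun z => G (z, w))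
    (hG₂ : ∀ z, Differentiable ℂ fun w => G (z, w))
    (h : ∀ s t : ℝ, F (I * s, I * t) = G (I * s, I * t)) : F = G := by
  have h₁ : ∀ (t : ℝ) (z : ℂ), F (z, I * t) = G (z, I * t) := fun t =>
    congrFun ((hF₁ _).eq_of_eq_on_imaginary_axis (hG₁ _) fun s => h s t)
  funext ⟨z, w⟩
  exact congrFun ((hF₂ z).eq_of_eq_on_imaginary_axis (hG₂ z) fun t => h₁ t z) w

theorem abs_mul_exp_neg_sq_half_le_one (s : ℝ) : |s| * Real.exp (-s ^ 2 / 2) ≤ 1 := by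
  have h : |s| ≤ Real.exp (s ^ 2 / 2) := by
    nlinarith [Real.add_one_le_exp (s ^ 2 / 2), sq_abs s, sq_nonneg (|s| - 1)]
  calc |s| * Real.exp (-s ^ 2 / 2) ≤ Real.exp (s ^ 2 / 2) * Real.exp (-s ^ 2 / 2) := by gcongr
    _ = 1 := by rw [← Real.exp_add]; ring_nf; exact Real.exp_zero

theorem norm_cexp_neg_sub_sq_half (z : ℂ) (t : ℝ) :
    ‖cexp (-(z - t) ^ 2 / 2)‖ = Real.exp (-(z.re - t) ^ 2 / 2) * Real.exp (z.im ^ 2 / 2) := by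
  rw [Complex.norm_exp, ← Real.exp_add]
  congr 1
  simp [sq]
  ring

theorem norm_cexp_neg_sub_sq_half_le (z : ℂ) (t : ℝ) :
    ‖cexp (-(z - t) ^ 2 / 2)‖ ≤ Real.exp (z.im ^ 2 / 2) := by
  rw [norm_cexp_neg_sub_sq_half]
  exact mul_le_of_le_one_left (Real.exp_nonneg _) (Real.exp_le_one_iff.2 (by nlinarith))

theorem norm_sub_mul_cexp_neg_sub_sq_half_le (z : ℂ) (t : ℝ) :
    ‖(z - t) * cexp (-(z - t) ^ 2 / 2)‖ ≤ (1 + |z.im|) * Real.exp (z.im ^ 2 / 2) := by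
  have hre : |z.re - t| * Real.exp (-(z.re - t) ^ 2 / 2) ≤ 1 :=
    abs_mul_exp_neg_sq_half_le_one _
  have hexp : Real.exp (-(z.re - t) ^ 2 / 2) ≤ 1 := Real.exp_le_one_iff.2 (by nlinarith)
  have hnorm : ‖z - t‖ ≤ |z.re - t| + |z.im| := by
    simpa using Complex.norm_le_abs_re_add_abs_im (z - t)
  rw [norm_mul, norm_cexp_neg_sub_sq_half, ← mul_assoc]
  gcongr
  calc ‖z - t‖ * Real.exp (-(z.re - t) ^ 2 / 2)
      ≤ (|z.re - t| + |z.im|) * Real.exp (-(z.re - t) ^ 2 / 2) := by gcongr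
    _ ≤ 1 + |z.im| := by nlinarith [abs_nonneg z.im]

section GaussianTransform

variable {α : Type*} [MeasurableSpace α] {μ : Measure α} {u : α → ℝ} {g : α → ℂ}

theorem integrable_cexp_neg_sub_sq_half_mul (hu : AEStronglyMeasurable u μ)
    (hg : Integrable g μ) (z : ℂ) : Integrable (fun a => cexp (-(z - u a) ^ 2 / 2) * g a) μ :=
  hg.bdd_mul
    ((by fun_prop : Continuous fun t : ℝ => cexp (-(z - t) ^ 2 / 2)).comp_aestronglyMeasurable hu)
    (ae_of_all _ fun a => norm_cexp_neg_sub_sq_half_le z (u a))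

theorem differentiable_integral_cexp_neg_sub_sq_half_mul (hu : AEStronglyMeasurable u μ)
    (hg : Integrable g μ) :
    Differentiable ℂ fun z => ∫ a, cexp (-(z - u a) ^ 2 / 2) * g a ∂μ := by
  intro z₀
  have hderiv (a : α) (z : ℂ) : HasDerivAt (fun z => cexp (-(z - u a) ^ 2 / 2) * g a)
      (-((z - u a) * cexp (-(z - u a) ^ 2 / 2)) * g a) z := by
    have h : HasDerivAt (fun z : ℂ => -(z - u a) ^ 2 / 2) (-(z - u a)) z := by
      refine ((((hasDerivAt_id' z).sub_const (u a : ℂ)).fun_pow 2).fun_neg.div_const 2).congr_deriv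
        (by norm_num; ring)
    exact (h.cexp.mul_const (g a)).congr_deriv (by ring)
  have hbound (a : α) (z : ℂ) (hz : z ∈ Metric.ball z₀ 1) :
      ‖-((z - u a) * cexp (-(z - u a) ^ 2 / 2)) * g a‖ ≤
        (2 + |z₀.im|) * Real.exp ((|z₀.im| + 1) ^ 2 / 2) * ‖g a‖ := by
    have him : |z.im| ≤ |z₀.im| + 1 := by
      have h := Complex.abs_im_le_norm (z - z₀)
      rw [Complex.sub_im, ← dist_eq_norm] at h
      linarith [abs_sub_abs_le_abs_sub z.im z₀.im, Metric.mem_ball.1 hz]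
    rw [norm_mul, norm_neg]
    gcongr
    calc _ ≤ (1 + |z.im|) * Real.exp (z.im ^ 2 / 2) :=
          norm_sub_mul_cexp_neg_sub_sq_half_le z (u a)
      _ ≤ (2 + |z₀.im|) * Real.exp ((|z₀.im| + 1) ^ 2 / 2) := by
        rw [← sq_abs z.im]
        exact mul_le_mul (by linarith) (Real.exp_le_exp.2 (by gcongr)) (by positivity)
          (by positivity)
  have hF' : AEStronglyMeasurable (fun a => -((z₀ - u a) * cexp (-(z₀ - u a) ^ 2 / 2)) * g a) μ :=
    ((by fun_prop : Continuous fun t : ℝ => -((z₀ - t) * cexp (-(z₀ - t) ^ 2 / 2)))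
      |>.comp_aestronglyMeasurable hu).mul hg.1
  exact (hasDerivAt_integral_of_dominated_loc_of_deriv_le (Metric.ball_mem_nhds z₀ one_pos)
    (Eventually.of_forall fun z => (integrable_cexp_neg_sub_sq_half_mul hu hg z).1)
    (integrable_cexp_neg_sub_sq_half_mul hu hg z₀) hF' (ae_of_all _ hbound) (hg.norm.const_mul _)
    (ae_of_all _ fun a z _ => hderiv a z)).2.differentiableAt

end GaussianTransform

-- Fourier inversion is available on inner product spaces, and `ℝ × ℝ` carries the sup norm.
def euclideanToProd : EuclideanSpace ℝ (Fin 2) ≃ᵐ ℝ × ℝ :=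
  (MeasurableEquiv.toLp 2 (Fin 2 → ℝ)).symm.trans MeasurableEquiv.finTwoArrow

theorem euclideanToProd_apply (x : EuclideanSpace ℝ (Fin 2)) :
    euclideanToProd x = (x 0, x 1) := rfl

theorem measurePreserving_euclideanToProd : MeasurePreserving euclideanToProd :=
  (EuclideanSpace.volume_preserving_symm_measurableEquiv_toLp (Fin 2)).trans
    (volume_preserving_finTwoArrow ℝ)

theorem continuous_euclideanToProd : Continuous euclideanToProd := by
  simp only [funext euclideanToProd_apply]
  fun_prop

theorem inner_eq_euclideanToProd (ξ x : EuclideanSpace ℝ (Fin 2)) :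
    ⟪ξ, x⟫ = (euclideanToProd ξ).1 * (euclideanToProd x).1 +
      (euclideanToProd ξ).2 * (euclideanToProd x).2 := by
  simp [euclideanToProd_apply, PiLp.inner_apply, Fin.sum_univ_two, mul_comm]

noncomputable def fourierProd (f : ℝ × ℝ → ℂ) (p : ℝ × ℝ) : ℂ :=
  ∫ y : ℝ × ℝ, cexp (-I * ((p.1 * y.1 + p.2 * y.2 : ℝ) : ℂ)) * f y

theorem fourier_comp_euclideanToProd (f : ℝ × ℝ → ℂ) (ξ : EuclideanSpace ℝ (Fin 2)) :
    𝓕 (f ∘ euclideanToProd) ξ = fourierProd f ((2 * π) • euclideanToProd ξ) := by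
  rw [Real.fourier_eq', fourierProd, ← measurePreserving_euclideanToProd.integral_comp']
  congr 1
  ext x
  rw [inner_eq_euclideanToProd, smul_eq_mul, Function.comp_apply]
  simp only [Prod.smul_fst, Prod.smul_snd, smul_eq_mul]
  push_cast
  ring_nf

theorem integral_cexp_mul_fourierProd {f : ℝ × ℝ → ℂ} {y : ℝ × ℝ} (hf : Integrable f)
    (hF : Integrable (fourierProd f)) (hy : ContinuousAt f y) :
    ∫ p : ℝ × ℝ, cexp (I * ((p.1 * y.1 + p.2 * y.2 : ℝ) : ℂ)) * fourierProd f p =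
      (2 * π) ^ 2 * f y := by
  have he := measurePreserving_euclideanToProd
  have hemb := euclideanToProd.measurableEmbedding
  obtain ⟨x, rfl⟩ := euclideanToProd.surjective y
  have hf' : Integrable (f ∘ euclideanToProd) := (he.integrable_comp_emb hemb).2 hf
  have hF' : Integrable (𝓕 (f ∘ euclideanToProd)) := by
    rw [funext (fourier_comp_euclideanToProd f)]
    exact (he.integrable_comp_emb hemb).2
      ((integrable_comp_smul_iff volume _ (by positivity)).2 hF)
  have hinv := hf'.fourierInv_fourier_eq hF' (hy.comp continuous_euclideanToProd.continuousAt)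
  set K := fun p : ℝ × ℝ =>
    cexp (I * ((p.1 * (euclideanToProd x).1 + p.2 * (euclideanToProd x).2 : ℝ) : ℂ)) *
      fourierProd f p
  calc ∫ p, K p = (2 * π) ^ 2 * ∫ p, K ((2 * π) • p) := by
        rw [Measure.integral_comp_smul, Module.finrank_prod, Module.finrank_self, Complex.real_smul,
          abs_of_pos (by positivity), ← mul_assoc]
        norm_num
    _ = (2 * π) ^ 2 * ∫ ξ, K ((2 * π) • euclideanToProd ξ) := by
        rw [he.integral_comp' (fun p => K ((2 * π) • p))]
    _ = (2 * π) ^ 2 * 𝓕⁻ (𝓕 (f ∘ euclideanToProd)) x := by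
        rw [Real.fourierInv_eq']
        congr 1
        refine integral_congr_ae (ae_of_all _ fun ξ => ?_)
        dsimp only
        rw [fourier_comp_euclideanToProd, inner_eq_euclideanToProd, smul_eq_mul]
        simp only [K, Prod.smul_fst, Prod.smul_snd, smul_eq_mul]
        push_cast
        ring_nf
    _ = (2 * π) ^ 2 * f (euclideanToProd x) := by rw [hinv]; rfl

noncomputable def gaussianConvolution (f : ℝ × ℝ → ℂ) (z : ℂ × ℂ) : ℂ :=
  ∫ p : ℝ × ℝ, cexp (-(z.1 - p.1) ^ 2 / 2) * (cexp (-(z.2 - p.2) ^ 2 / 2) * f p)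

theorem gaussianConvolution_ofReal (f : ℝ × ℝ → ℂ) (q : ℝ × ℝ) :
    gaussianConvolution f (q.1, q.2) = ∫ p : ℝ × ℝ,
      ((Real.exp (-((q.1 - p.1) ^ 2 + (q.2 - p.2) ^ 2) / 2) : ℝ) : ℂ) * f p := by
  refine integral_congr_ae (ae_of_all _ fun p => ?_)
  dsimp only
  rw [← mul_assoc, ← Complex.exp_add, Complex.ofReal_exp]
  push_cast
  ring_nf

theorem gaussianConvolution_I_mul (f : ℝ × ℝ → ℂ) (y : ℝ × ℝ) :
    gaussianConvolution f (I * y.1, I * y.2) = Real.exp ((y.1 ^ 2 + y.2 ^ 2) / 2) *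
      ∫ p : ℝ × ℝ, cexp (I * ((p.1 * y.1 + p.2 * y.2 : ℝ) : ℂ)) *
        (((Real.exp (-(p.1 ^ 2 + p.2 ^ 2) / 2) : ℝ) : ℂ) * f p) := by
  rw [gaussianConvolution, ← integral_const_mul]
  refine integral_congr_ae (ae_of_all _ fun p => ?_)
  simp only [Complex.ofReal_exp, ← mul_assoc, ← Complex.exp_add]
  congr 2
  push_cast
  ring_nf
  rw [Complex.I_sq]
  ring

section

variable {f : ℝ × ℝ → ℂ}

theorem differentiable_gaussianConvolution_fst (hf : Integrable f) (w : ℂ) :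
    Differentiable ℂ fun z => gaussianConvolution f (z, w) :=
  differentiable_integral_cexp_neg_sub_sq_half_mul measurable_fst.aestronglyMeasurable
    (integrable_cexp_neg_sub_sq_half_mul measurable_snd.aestronglyMeasurable hf w)

theorem differentiable_gaussianConvolution_snd (hf : Integrable f) (z : ℂ) :
    Differentiable ℂ fun w => gaussianConvolution f (z, w) := by
  simp_rw [gaussianConvolution, mul_left_comm (cexp (-(z - _) ^ 2 / 2))]
  exact differentiable_integral_cexp_neg_sub_sq_half_mul measurable_snd.aestronglyMeasurable
    (integrable_cexp_neg_sub_sq_half_mul measurable_fst.aestronglyMeasurable hf z)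

end

noncomputable def gaussianImag (V : ℂ × ℂ → ℂ) (y : ℝ × ℝ) : ℂ :=
  ((Real.exp (-(y.1 ^ 2 + y.2 ^ 2) / 2) : ℝ) : ℂ) * V (I * y.1, I * y.2)

section

variable {V : ℂ × ℂ → ℂ}

theorem gaussian_mul_modFT (p : ℝ × ℝ) :
    ((Real.exp (-(p.1 ^ 2 + p.2 ^ 2) / 2) : ℝ) : ℂ) * modFT V p =
      fourierProd (gaussianImag V) p / ((2 * π : ℝ) : ℂ) ^ 2 := by
  rw [modFT, ← mul_assoc, ← Complex.ofReal_mul, ← Real.exp_add, integral_div, fourierProd]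
  simp only [gaussianImag, mul_assoc]
  ring_nf
  simp

theorem integrable_fourierProd_gaussianImag (hFT : Integrable (modFT V)) :
    Integrable (fourierProd (gaussianImag V)) := by
  have hbdd : Integrable fun p : ℝ × ℝ =>
      ((Real.exp (-(p.1 ^ 2 + p.2 ^ 2) / 2) : ℝ) : ℂ) * modFT V p :=
    hFT.bdd_mul (by fun_prop) (ae_of_all _ fun p => by
      rw [Complex.norm_real, Real.norm_eq_abs, abs_of_pos (Real.exp_pos _)]
      exact Real.exp_le_one_iff.2 (by nlinarith [sq_nonneg p.1, sq_nonneg p.2]))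
  refine (hbdd.const_mul (((2 * π : ℝ) : ℂ) ^ 2)).congr (ae_of_all _ fun p => ?_)
  dsimp only
  rw [gaussian_mul_modFT, mul_div_cancel₀ _ (by norm_cast; positivity)]

theorem gaussianConvolution_modFT_I_mul (hV : Continuous V) (hL1 : Integrable (gaussianImag V))
    (hFT : Integrable (modFT V)) (s t : ℝ) :
    gaussianConvolution (modFT V) (I * s, I * t) = V (I * s, I * t) := by
  have hW : Continuous (gaussianImag V) := by unfold gaussianImag; fun_prop
  rw [gaussianConvolution_I_mul (modFT V) (s, t)]
  simp_rw [gaussian_mul_modFT, mul_div_assoc']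
  rw [integral_div,
    integral_cexp_mul_fourierProd (y := (s, t)) hL1 (integrable_fourierProd_gaussianImag hFT)
      hW.continuousAt, gaussianImag]
  push_cast
  rw [mul_div_cancel_left₀ _ (by simp [Real.pi_ne_zero]), ← mul_assoc, ← Complex.exp_add]
  ring_nf
  simp

end

theorem gaussian_convolution_representation_general (V : ℂ × ℂ → ℂ)
    (hV : Differentiable ℂ V)
    (hL1 : Integrable (fun y : ℝ × ℝ =>
      ((Real.exp (-(y.1 ^ 2 + y.2 ^ 2) / 2) : ℝ) : ℂ) *
        V (Complex.I * y.1, Complex.I * y.2)))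
    (hFT : Integrable (modFT V)) :
    ∀ q : ℝ × ℝ, V ((q.1 : ℂ), (q.2 : ℂ)) =
      ∫ p : ℝ × ℝ,
        ((Real.exp (-((q.1 - p.1) ^ 2 + (q.2 - p.2) ^ 2) / 2) : ℝ) : ℂ) * modFT V p := by
  have hext : gaussianConvolution (modFT V) = V :=
    eq_of_eq_on_imaginary_plane (differentiable_gaussianConvolution_fst hFT)
      (differentiable_gaussianConvolution_snd hFT)
      (fun w => hV.comp (differentiable_id.prodMk (differentiable_const w)))
      (fun z => hV.comp ((differentiable_const z).prodMk differentiable_id))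
      (gaussianConvolution_modFT_I_mul hV.continuous hL1 hFT)
  intro q
  rw [← gaussianConvolution_ofReal, hext]

/-- If `V : ℂ² → ℂ` is entire, real on `ℝ²`, with `y ↦ e^{−y²/2} V(iy)` in `L¹(ℝ²)`
and `Ṽ ∈ L¹(ℝ²)`, then `V = g ∗ (Ṽ dq)` with `g` the standard Gaussian:
`V(q) = ∫ e^{−|q−p|²/2} Ṽ(p) dp` for all `q ∈ ℝ²`. -/
theorem gaussian_convolution_representation (V : ℂ × ℂ → ℂ)
    (hV : Differentiable ℂ V)
    (hreal : ∀ y : ℝ × ℝ, ((V ((y.1 : ℂ), (y.2 : ℂ))).im = 0))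
    (hL1 : Integrable (fun y : ℝ × ℝ =>
      ((Real.exp (-(y.1 ^ 2 + y.2 ^ 2) / 2) : ℝ) : ℂ) *
        V (Complex.I * y.1, Complex.I * y.2)))
    (hFT : Integrable (modFT V)) :
    ∀ q : ℝ × ℝ, V ((q.1 : ℂ), (q.2 : ℂ)) =
      ∫ p : ℝ × ℝ,
        ((Real.exp (-((q.1 - p.1) ^ 2 + (q.2 - p.2) ^ 2) / 2) : ℝ) : ℂ) * modFT V p :=
  gaussian_convolution_representation_general V hV hL1 hFT
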